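/- arXiv:1904.10685 — 2 statements merged into one kernel-verified Lean document; each statement's English description precedes it below -/
import Mathlib

section
/- The limit function u_∞ of the recursive construction on a countable state space satisfies: u_∞ = φ and K[u_∞](x) ≤ (r + L(x)) u_∞(x) on D_∞, while u_∞ ≥ φ and K[u_∞](x) = (r + L(x)) u_∞(x) on V \ D_∞, where D_∞ = ∩_n D_n and u_∞ = lim_n u_n (monotone limit in [0,∞]). -/
open scoped ENNReal Classical

/-- The off-diagonal action `K[f](x) = Σ_{z≠x} L(x,z) f(z)` of the generator on
`[0,∞]`-valued functions. -/
noncomputable def Kop {V : Type*} (Lmat : V → V → ℝ) (f : V → ℝ≥0∞) (x : V) : ℝ≥0∞ :=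
  ∑' z : V, (if z = x then 0 else ENNReal.ofReal (Lmat x z)) * f z

lemma Kop_iSup_mono {V : Type*} (Lmat : V → V → ℝ) (u : ℕ → V → ℝ≥0∞)
    (hu : ∀ z, Monotone (fun n => u n z)) (x : V) :
    Kop Lmat (fun y => ⨆ n, u n y) x = ⨆ n, Kop Lmat (u n) x := by
  unfold Kop
  simp_rw [ENNReal.mul_iSup]
  rw [ENNReal.tsum_eq_iSup_sum]
  have h : ∀ z, Monotone (fun n =>
      (if z = x then 0 else ENNReal.ofReal (Lmat x z)) * u n z) :=
    fun z a b hab => mul_le_mul_right (hu z hab) _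
  simp_rw [ENNReal.finsetSum_iSup_of_monotone h]
  rw [iSup_comm]
  congr 1
  funext n
  exact (ENNReal.tsum_eq_iSup_sum).symm

/-- The limit function `u_∞ = lim_n u_n = ⨆_n u_n` (monotone limit in
`[0,∞]`) of the recursive construction on a countable state space satisfies:
`u_∞ = φ` and `K[u_∞](x) ≤ (r + L(x)) u_∞(x)` on `D_∞ = ⋂_n D_n`, while `u_∞ ≥ φ` and
`K[u_∞](x) = (r + L(x)) u_∞(x)` on `V \ D_∞`.

Recursion hypotheses: `D₀ = V`, `u₀ = φ`,
`D_{n+1} = {x ∈ D_n : K[u_n](x) ≤ (r+L(x)) u_n(x)}`, each `u_n` satisfies `u_n = φ`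
on `D_n` and `(r+L) u_n = K[u_n]` off `D_n`, and `(u_n)` is non-decreasing. -/
theorem limit_function_properties_countable
    {V : Type*} [Countable V]
    (Lmat : V → V → ℝ) (Ldiag : V → ℝ)
    (hoff : ∀ x z, x ≠ z → 0 ≤ Lmat x z)
    (hLdiag : ∀ x, 0 ≤ Ldiag x)
    (r : ℝ) (hr : 0 < r)
    (φ : V → ℝ≥0∞)
    (u : ℕ → V → ℝ≥0∞) (D : ℕ → Set V)
    (hD0 : D 0 = Set.univ) (hu0 : u 0 = φ)
    (hmono : ∀ n x, u n x ≤ u (n+1) x)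
    (hDrec : ∀ n, D (n+1)
      = {x ∈ D n | Kop Lmat (u n) x ≤ ENNReal.ofReal (r + Ldiag x) * u n x})
    (hfix : ∀ n, ∀ x ∈ D n, u n x = φ x)
    (heq : ∀ n, ∀ x ∉ D n,
      ENNReal.ofReal (r + Ldiag x) * u n x = Kop Lmat (u n) x) :
    (∀ x ∈ ⋂ n, D n,
      (⨆ n, u n x) = φ x ∧
      Kop Lmat (fun y => ⨆ n, u n y) x
        ≤ ENNReal.ofReal (r + Ldiag x) * ⨆ n, u n x) ∧
    (∀ x ∉ ⋂ n, D n,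
      φ x ≤ (⨆ n, u n x) ∧
      Kop Lmat (fun y => ⨆ n, u n y) x
        = ENNReal.ofReal (r + Ldiag x) * ⨆ n, u n x) := by
  have humono : ∀ z, Monotone (fun n => u n z) := fun z =>
    monotone_nat_of_le_succ (fun n => hmono n z)
  have hKsup : ∀ x, Kop Lmat (fun y => ⨆ n, u n y) x = ⨆ n, Kop Lmat (u n) x :=
    Kop_iSup_mono Lmat u humono
  have hDdec : ∀ n, D (n+1) ⊆ D n := by
    intro n x hx; rw [hDrec n] at hx; exact hx.1
  constructor
  · intro x hx
    simp only [Set.mem_iInter] at hx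
    have hphi : ∀ n, u n x = φ x := fun n => hfix n x (hx n)
    have hsup : (⨆ n, u n x) = φ x := by
      simp_rw [hphi]; exact iSup_const
    refine ⟨hsup, ?_⟩
    rw [hKsup, hsup]
    refine iSup_le fun n => ?_
    have hx1 := hx (n+1)
    rw [hDrec n] at hx1
    calc Kop Lmat (u n) x ≤ ENNReal.ofReal (r + Ldiag x) * u n x := hx1.2
      _ = ENNReal.ofReal (r + Ldiag x) * φ x := by rw [hphi n]
  · intro x hx
    simp only [Set.mem_iInter, not_forall] at hx
    obtain ⟨N, hN⟩ := hx
    have hout : ∀ n, x ∉ D (n + N) := by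
      intro n; induction n with
      | zero => simpa using hN
      | succ k ih => intro h; rw [Nat.succ_add] at h; exact ih (hDdec _ h)
    constructor
    · rw [← hu0]; exact le_iSup (fun n => u n x) 0
    · rw [hKsup]
      have h1 : (⨆ n, Kop Lmat (u n) x) = ⨆ n, Kop Lmat (u (n + N)) x := by
        refine (Monotone.iSup_nat_add ?_ N).symm
        intro a b hab
        exact ENNReal.tsum_le_tsum fun z => mul_le_mul_right (humono z hab) _
      have h2 : (⨆ n, u n x) = ⨆ n, u (n + N) x :=
        ((humono x).iSup_nat_add N).symm
      rw [h1, h2, ENNReal.mul_iSup]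
      congr 1
      funext n
      exact (heq _ x (hout n)).symm
end

section
/- In the countable-state recursive construction, u_∞(x) > φ(x) for every x ∈ V \ D_∞; consequently D_∞ = {x ∈ V : u_∞(x) = φ(x)}. -/
/-!
A point leaving `D` does so at a first step: `x ∈ D m \ D (m+1)`. There the exit inequality
`c · u_m(x) < K[u_m](x)`, the equation `c · u_{m+1}(x) = K[u_{m+1}](x)` and the monotonicity of
`K` force `u_{m+1}(x) > u_m(x) = φ(x)`, as the coefficient `c = r + L(x)` is positive and finite.
On `D_∞` every `u_n` equals `φ`, which gives the characterisation of `D_∞`.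
-/

open scoped ENNReal Classical

theorem Kop_mono {V : Type*} (Lmat : V → V → ℝ) {f g : V → ℝ≥0∞} (hfg : f ≤ g) (x : V) :
    Kop Lmat f x ≤ Kop Lmat g x :=
  ENNReal.tsum_le_tsum fun z => mul_le_mul_right (hfg z) _

theorem Set.exists_mem_notMem_succ {V : Type*} {D : ℕ → Set V} {x : V} (h0 : x ∈ D 0)
    (hx : x ∉ ⋂ n, D n) : ∃ m, x ∈ D m ∧ x ∉ D (m + 1) := by
  by_contra! hstay
  exact hx (Set.mem_iInter.2 fun n => Nat.rec h0 hstay n)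

theorem lt_of_mul_lt_Kop {V : Type*} {Lmat : V → V → ℝ} {u u' : V → ℝ≥0∞} {c : ℝ≥0∞} {x : V}
    (hc0 : c ≠ 0) (hctop : c ≠ ⊤) (hle : u ≤ u')
    (hexit : c * u x < Kop Lmat u x) (hsolve : c * u' x = Kop Lmat u' x) :
    u x < u' x := by
  refine (ENNReal.mul_lt_mul_iff_right hc0 hctop).1 ?_
  calc c * u x < Kop Lmat u x := hexit
    _ ≤ Kop Lmat u' x := Kop_mono Lmat hle x
    _ = c * u' x := hsolve.symm

theorem strict_majorant_off_Dinf_general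
    {V : Type*}
    (Lmat : V → V → ℝ) (Ldiag : V → ℝ)
    (hLdiag : ∀ x, 0 ≤ Ldiag x)
    (r : ℝ) (hr : 0 < r)
    (φ : V → ℝ≥0∞)
    (u : ℕ → V → ℝ≥0∞) (D : ℕ → Set V)
    (hD0 : D 0 = Set.univ)
    (hmono : ∀ n x, u n x ≤ u (n+1) x)
    (hDrec : ∀ n, D (n+1)
      = {x ∈ D n | Kop Lmat (u n) x ≤ ENNReal.ofReal (r + Ldiag x) * u n x})
    (hfix : ∀ n, ∀ x ∈ D n, u n x = φ x)
    (heq : ∀ n, ∀ x ∉ D n,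
      ENNReal.ofReal (r + Ldiag x) * u n x = Kop Lmat (u n) x) :
    (∀ x ∉ ⋂ n, D n, φ x < ⨆ n, u n x) ∧
    (⋂ n, D n) = {x | (⨆ n, u n x) = φ x} := by
  have hlt : ∀ x ∉ ⋂ n, D n, φ x < ⨆ n, u n x := by
    intro x hx
    obtain ⟨m, hxm, hxm'⟩ := Set.exists_mem_notMem_succ (hD0 ▸ Set.mem_univ x) hx
    have hexit : ENNReal.ofReal (r + Ldiag x) * u m x < Kop Lmat (u m) x := by
      simpa [hDrec m, hxm] using hxm'
    have hc0 : ENNReal.ofReal (r + Ldiag x) ≠ 0 := by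
      simpa using add_pos_of_pos_of_nonneg hr (hLdiag x)
    calc φ x = u m x := (hfix m x hxm).symm
      _ < u (m + 1) x := lt_of_mul_lt_Kop hc0 ENNReal.ofReal_ne_top (hmono m)
          hexit (heq (m + 1) x hxm')
      _ ≤ ⨆ n, u n x := le_iSup (fun n => u n x) (m + 1)
  refine ⟨hlt, Set.ext fun x => ⟨fun hx => ?_, fun hx => ?_⟩⟩
  · simp_rw [Set.mem_ofPred_eq, hfix _ x (Set.mem_iInter.1 hx _), iSup_const]
  · by_contra hx'
    exact (hlt x hx').ne hx.symm

/-- In the countable-state recursive construction, `u_∞(x) > φ(x)` for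
every `x ∈ V \ D_∞`; consequently `D_∞ = {x ∈ V : u_∞(x) = φ(x)}`.

Setup as in the recursion: `D₀ = V`, `u₀ = φ`,
`D_{n+1} = {x ∈ D_n : K[u_n](x) ≤ (r+L(x)) u_n(x)}`, `(u_n)` non-decreasing with
`u_n = φ` on `D_n` and `(r+L(x)) u_n(x) = K[u_n](x)` off `D_n`;
`u_∞ = ⨆_n u_n`, `D_∞ = ⋂_n D_n`. -/
theorem strict_majorant_off_Dinf
    {V : Type*} [Countable V]
    (Lmat : V → V → ℝ) (Ldiag : V → ℝ)
    (hoff : ∀ x z, x ≠ z → 0 ≤ Lmat x z)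
    (hLdiag : ∀ x, 0 ≤ Ldiag x)
    (r : ℝ) (hr : 0 < r)
    (φ : V → ℝ≥0∞)
    (u : ℕ → V → ℝ≥0∞) (D : ℕ → Set V)
    (hD0 : D 0 = Set.univ) (hu0 : u 0 = φ)
    (hmono : ∀ n x, u n x ≤ u (n+1) x)
    (hDrec : ∀ n, D (n+1)
      = {x ∈ D n | Kop Lmat (u n) x ≤ ENNReal.ofReal (r + Ldiag x) * u n x})
    (hfix : ∀ n, ∀ x ∈ D n, u n x = φ x)
    (heq : ∀ n, ∀ x ∉ D n,
      ENNReal.ofReal (r + Ldiag x) * u n x = Kop Lmat (u n) x) :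
    (∀ x ∉ ⋂ n, D n, φ x < ⨆ n, u n x) ∧
    (⋂ n, D n) = {x | (⨆ n, u n x) = φ x} :=
  strict_majorant_off_Dinf_general Lmat Ldiag hLdiag r hr φ u D hD0 hmono hDrec hfix heq
end
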